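/- Let ℰ = ((Â,[·,·]_Â),(V̂,ρ̂),T̂) be a non-abelian extension of 𝒜 = ((A,[·,·]_A),(V,ρ),T) by ℬ = ((B,[·,·]_B),(M,ν_M),S), and let (𝔰,s) be a section of the projection (𝔭,p). Define ω(x,y) = [𝔰(x),𝔰(y)]_Â − 𝔰[x,y]_A, ϖ(x,v) = ρ̂(𝔰(x))s(v) − s(ρ(x)v), χ(v) = T̂(s(v)) − 𝔰(T(v)), μ(v)a = −ρ̂(a)s(v), ρ_B(x)a = [𝔰(x),a]_Â, ρ_M(x)m = ρ̂(𝔰(x))m. Then (ω,ϖ,χ,μ,ρ_B,ρ_M) is a non-abelian 2-cocycle on 𝒜 with values in ℬ. -/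
import Mathlib


universe u

section
variable (K : Type u) [Field K]

/-- A relative Rota-Baxter Lie algebra: a Lie algebra `A`, a representation `rep` of `A`
on `V`, and a relative Rota-Baxter operator `T : V → A`. -/
structure RelRB (A V : Type u) [AddCommGroup A] [Module K A]
    [AddCommGroup V] [Module K V] : Type u where
  br : A →ₗ[K] A →ₗ[K] A
  skew : ∀ x y, br x y + br y x = 0
  jacobi : ∀ x y z, br x (br y z) = br (br x y) z + br y (br x z)
  rep : A →ₗ[K] Module.End K V
  rep_br : ∀ x y, rep (br x y) = rep x * rep y - rep y * rep x
  T : V →ₗ[K] A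
  rb : ∀ u v, br (T u) (T v) = T (rep (T u) v - rep (T v) u)

variable {A V B M : Type u}
  [AddCommGroup A] [Module K A] [AddCommGroup V] [Module K V]
  [AddCommGroup B] [Module K B] [AddCommGroup M] [Module K M]

/-- A non-abelian 2-cocycle on `𝒜` with values in `ℬ`: identities (L1)-(L9). -/
def IsNACocycle (𝒜 : RelRB K A V) (ℬ : RelRB K B M)
    (ω : A → A → B) (ϖ : A → V → M) (χ : V → B)
    (μ : V → B → M) (ρB : A → B → B) (ρM : A → M → M) : Prop :=
  (∀ x y, ω x y + ω y x = 0) ∧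
  (∀ x y a, ρB x (ρB y a) - ρB y (ρB x a) - ρB (𝒜.br x y) a = ℬ.br (ω x y) a) ∧
  (∀ x y z, ρB x (ω y z) + ρB y (ω z x) + ρB z (ω x y)
      = ω (𝒜.br x y) z + ω (𝒜.br y z) x + ω (𝒜.br z x) y) ∧
  (∀ x y v, ϖ x (𝒜.rep y v) - ϖ y (𝒜.rep x v) - ϖ (𝒜.br x y) v
      = ρM y (ϖ x v) - ρM x (ϖ y v) - μ v (ω x y)) ∧
  (∀ x y m, ρM x (ρM y m) - ρM y (ρM x m) = ρM (𝒜.br x y) m + ℬ.rep (ω x y) m) ∧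
  (∀ x v a, ρM x (μ v a) - μ (𝒜.rep x v) a + ℬ.rep a (ϖ x v) = μ v (ρB x a)) ∧
  (∀ x a m, ρM x (ℬ.rep a m) - ℬ.rep a (ρM x m) = ℬ.rep (ρB x a) m) ∧
  (∀ v m, ρB (𝒜.T v) (ℬ.T m) + ℬ.br (χ v) (ℬ.T m)
      = ℬ.T (ρM (𝒜.T v) m + ℬ.rep (χ v) m + μ v (ℬ.T m))) ∧
  (∀ v₁ v₂, ρB (𝒜.T v₁) (χ v₂) - ρB (𝒜.T v₂) (χ v₁) + ℬ.br (χ v₁) (χ v₂)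
        + ω (𝒜.T v₁) (𝒜.T v₂)
      = ℬ.T (ϖ (𝒜.T v₁) v₂ - ϖ (𝒜.T v₂) v₁)
        + χ (𝒜.rep (𝒜.T v₁) v₂ - 𝒜.rep (𝒜.T v₂) v₁)
        + ℬ.T (μ v₁ (χ v₂) - μ v₂ (χ v₁)))
/-- A non-abelian extension of `𝒜` by `ℬ`: a relative Rota-Baxter Lie algebra `ℰ`
together with a short exact sequence `0 → ℬ → ℰ → 𝒜 → 0` of relative Rota-Baxter Lie
algebras. -/
structure ExtData {Ah Vh : Type u} [AddCommGroup Ah] [Module K Ah]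
    [AddCommGroup Vh] [Module K Vh]
    (𝒜 : RelRB K A V) (ℬ : RelRB K B M) (ℰ : RelRB K Ah Vh) : Type u where
  iB : B →ₗ[K] Ah
  iM : M →ₗ[K] Vh
  pA : Ah →ₗ[K] A
  pV : Vh →ₗ[K] V
  iB_br : ∀ a b, iB (ℬ.br a b) = ℰ.br (iB a) (iB b)
  iB_T : ∀ m, iB (ℬ.T m) = ℰ.T (iM m)
  i_rep : ∀ a m, iM (ℬ.rep a m) = ℰ.rep (iB a) (iM m)
  pA_br : ∀ x y, pA (ℰ.br x y) = 𝒜.br (pA x) (pA y)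
  p_T : ∀ vh, pA (ℰ.T vh) = 𝒜.T (pV vh)
  p_rep : ∀ x vh, pV (ℰ.rep x vh) = 𝒜.rep (pA x) (pV vh)
  iB_inj : Function.Injective iB
  iM_inj : Function.Injective iM
  pA_surj : Function.Surjective pA
  pV_surj : Function.Surjective pV
  exactA : ∀ x, pA x = 0 ↔ x ∈ Set.range iB
  exactV : ∀ v, pV v = 0 ↔ v ∈ Set.range iM
/-- The non-abelian 2-cocycle induced by a section `(sA, sV)` of a non-abelian extension:
`iB (ω x y) = [sA x, sA y] - sA [x,y]`, `iM (ϖ x v) = ρ̂(sA x)(sV v) - sV (ρ(x)v)`,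
`iB (χ v) = T̂(sV v) - sA (T v)`, `iM (μ v a) = -ρ̂(iB a)(sV v)`,
`iB (ρB x a) = [sA x, iB a]`, `iM (ρM x m) = ρ̂(sA x)(iM m)`. -/
def InducedCocycle {Ah Vh : Type u} [AddCommGroup Ah] [Module K Ah]
    [AddCommGroup Vh] [Module K Vh]
    {𝒜 : RelRB K A V} {ℬ : RelRB K B M} {ℰ : RelRB K Ah Vh}
    (E : ExtData K 𝒜 ℬ ℰ) (sA : A →ₗ[K] Ah) (sV : V →ₗ[K] Vh)
    (ω : A → A → B) (ϖ : A → V → M) (χ : V → B)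
    (μ : V → B → M) (ρB : A → B → B) (ρM : A → M → M) : Prop :=
  (∀ x y, E.iB (ω x y) = ℰ.br (sA x) (sA y) - sA (𝒜.br x y)) ∧
  (∀ x v, E.iM (ϖ x v) = ℰ.rep (sA x) (sV v) - sV (𝒜.rep x v)) ∧
  (∀ v, E.iB (χ v) = ℰ.T (sV v) - sA (𝒜.T v)) ∧
  (∀ v a, E.iM (μ v a) = - ℰ.rep (E.iB a) (sV v)) ∧
  (∀ x a, E.iB (ρB x a) = ℰ.br (sA x) (E.iB a)) ∧
  (∀ x m, E.iM (ρM x m) = ℰ.rep (sA x) (E.iM m))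

lemma RelRB.br_swap {𝒜 : RelRB K A V} (x y : A) : 𝒜.br x y = - 𝒜.br y x :=
  eq_neg_of_add_eq_zero_left (𝒜.skew x y)

lemma RelRB.jacobi_cyc {𝒜 : RelRB K A V} (x y z : A) :
    𝒜.br x (𝒜.br y z) + 𝒜.br y (𝒜.br z x) + 𝒜.br z (𝒜.br x y) = 0 := by
  rw [𝒜.jacobi x y z, RelRB.br_swap K (𝒜 := 𝒜) z (𝒜.br x y),
    RelRB.br_swap K (𝒜 := 𝒜) z x, map_neg]
  abel

lemma RelRB.jacobi_cyc' {𝒜 : RelRB K A V} (x y z : A) :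
    𝒜.br (𝒜.br x y) z + 𝒜.br (𝒜.br y z) x + 𝒜.br (𝒜.br z x) y = 0 := by
  have e1 : 𝒜.br (𝒜.br x y) z = 𝒜.br x (𝒜.br y z) - 𝒜.br y (𝒜.br x z) := by
    rw [𝒜.jacobi x y z]; abel
  have e2 : 𝒜.br (𝒜.br y z) x = 𝒜.br y (𝒜.br z x) - 𝒜.br z (𝒜.br y x) := by
    rw [𝒜.jacobi y z x]; abel
  have e3 : 𝒜.br (𝒜.br z x) y = 𝒜.br z (𝒜.br x y) - 𝒜.br x (𝒜.br z y) := by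
    rw [𝒜.jacobi z x y]; abel
  have c1 := RelRB.jacobi_cyc K (𝒜 := 𝒜) x y z
  have c2 := RelRB.jacobi_cyc K (𝒜 := 𝒜) y x z
  have hsum : (𝒜.br x (𝒜.br y z) + 𝒜.br y (𝒜.br z x) + 𝒜.br z (𝒜.br x y)) -
      (𝒜.br y (𝒜.br x z) + 𝒜.br x (𝒜.br z y) + 𝒜.br z (𝒜.br y x)) = 0 := by
    rw [c1, c2, sub_zero]
  rw [e1, e2, e3, ← hsum]
  abel

lemma RelRB.rep_br_apply {𝒜 : RelRB K A V} (x y : A) (v : V) :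
    𝒜.rep (𝒜.br x y) v = 𝒜.rep x (𝒜.rep y v) - 𝒜.rep y (𝒜.rep x v) := by
  rw [𝒜.rep_br]
  simp [LinearMap.sub_apply, Module.End.mul_apply]

/-- the sextuple of maps defined from a section of a non-abelian extension
is a non-abelian 2-cocycle on `𝒜` with values in `ℬ`. -/
theorem section_induces_cocycle {Ah Vh : Type u} [AddCommGroup Ah] [Module K Ah]
    [AddCommGroup Vh] [Module K Vh]
    (𝒜 : RelRB K A V) (ℬ : RelRB K B M) (ℰ : RelRB K Ah Vh)
    (E : ExtData K 𝒜 ℬ ℰ) (sA : A →ₗ[K] Ah) (sV : V →ₗ[K] Vh)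
    (hsA : ∀ x, E.pA (sA x) = x) (hsV : ∀ v, E.pV (sV v) = v) :
    (∃ ω ϖ χ μ ρB ρM, InducedCocycle K E sA sV ω ϖ χ μ ρB ρM) ∧
    (∀ (ω : A → A → B) (ϖ : A → V → M) (χ : V → B)
       (μ : V → B → M) (ρB : A → B → B) (ρM : A → M → M),
      InducedCocycle K E sA sV ω ϖ χ μ ρB ρM →
      IsNACocycle K 𝒜 ℬ ω ϖ χ μ ρB ρM) := by
  constructor
  · -- existence of the induced cocycle, via exactness
    have memA : ∀ e : Ah, E.pA e = 0 → ∃ b, E.iB b = e := fun e h =>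
      Set.mem_range.mp ((E.exactA e).mp h)
    have memV : ∀ e : Vh, E.pV e = 0 → ∃ m, E.iM m = e := fun e h =>
      Set.mem_range.mp ((E.exactV e).mp h)
    have piB : ∀ b, E.pA (E.iB b) = 0 := fun b => (E.exactA _).mpr ⟨b, rfl⟩
    have piM : ∀ m, E.pV (E.iM m) = 0 := fun m => (E.exactV _).mpr ⟨m, rfl⟩
    have hω0 : ∀ x y, E.pA (ℰ.br (sA x) (sA y) - sA (𝒜.br x y)) = 0 := fun x y => by
      rw [map_sub, E.pA_br, hsA, hsA, hsA, sub_self]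
    have hϖ0 : ∀ x v, E.pV (ℰ.rep (sA x) (sV v) - sV (𝒜.rep x v)) = 0 := fun x v => by
      rw [map_sub, E.p_rep, hsA, hsV, hsV, sub_self]
    have hχ0 : ∀ v, E.pA (ℰ.T (sV v) - sA (𝒜.T v)) = 0 := fun v => by
      rw [map_sub, E.p_T, hsV, hsA, sub_self]
    have hμ0 : ∀ (v : V) (a : B), E.pV (- ℰ.rep (E.iB a) (sV v)) = 0 := fun v a => by
      simp [E.p_rep, piB]
    have hρB0 : ∀ (x : A) (a : B), E.pA (ℰ.br (sA x) (E.iB a)) = 0 := fun x a => by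
      simp [E.pA_br, piB]
    have hρM0 : ∀ (x : A) (m : M), E.pV (ℰ.rep (sA x) (E.iM m)) = 0 := fun x m => by
      simp [E.p_rep, piM]
    exact ⟨fun x y => (memA _ (hω0 x y)).choose,
      fun x v => (memV _ (hϖ0 x v)).choose,
      fun v => (memA _ (hχ0 v)).choose,
      fun v a => (memV _ (hμ0 v a)).choose,
      fun x a => (memA _ (hρB0 x a)).choose,
      fun x m => (memV _ (hρM0 x m)).choose,
      fun x y => (memA _ (hω0 x y)).choose_spec,
      fun x v => (memV _ (hϖ0 x v)).choose_spec,
      fun v => (memA _ (hχ0 v)).choose_spec,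
      fun v a => (memV _ (hμ0 v a)).choose_spec,
      fun x a => (memA _ (hρB0 x a)).choose_spec,
      fun x m => (memV _ (hρM0 x m)).choose_spec⟩
  · rintro ω ϖ χ μ ρB ρM ⟨hω, hϖ, hχ, hμ, hρB, hρM⟩
    refine ⟨?_, ?_, ?_, ?_, ?_, ?_, ?_, ?_, ?_⟩
    · -- (L1) skew-symmetry of ω
      intro x y
      apply E.iB_inj
      rw [map_add, hω, hω, map_zero, RelRB.br_swap K (𝒜 := ℰ) (sA y) (sA x),
        RelRB.br_swap K (𝒜 := 𝒜) y x, map_neg]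
      abel
    · -- (L2)
      intro x y a
      apply E.iB_inj
      simp only [map_sub, hρB, hω, E.iB_br, LinearMap.sub_apply]
      rw [ℰ.jacobi (sA x) (sA y) (E.iB a)]
      abel
    · -- (L3)
      intro x y z
      apply E.iB_inj
      simp only [map_add, map_sub, hρB, hω, LinearMap.sub_apply]
      rw [RelRB.br_swap K (𝒜 := ℰ) (sA (𝒜.br x y)) (sA z),
        RelRB.br_swap K (𝒜 := ℰ) (sA (𝒜.br y z)) (sA x),
        RelRB.br_swap K (𝒜 := ℰ) (sA (𝒜.br z x)) (sA y)]
      have cE := RelRB.jacobi_cyc K (𝒜 := ℰ) (sA x) (sA y) (sA z)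
      have h0 : ℰ.br (sA x) (ℰ.br (sA y) (sA z)) + ℰ.br (sA y) (ℰ.br (sA z) (sA x)) +
          ℰ.br (sA z) (ℰ.br (sA x) (sA y)) +
          (sA (𝒜.br (𝒜.br x y) z) + sA (𝒜.br (𝒜.br y z) x) + sA (𝒜.br (𝒜.br z x) y)) = 0 := by
        rw [cE, zero_add, ← map_add, ← map_add, RelRB.jacobi_cyc', map_zero]
      rw [← sub_eq_zero, ← h0]
      abel
    · -- (L4)
      intro x y v
      apply E.iM_inj
      simp only [map_sub, map_add, map_neg, hϖ, hρM, hμ, hω, LinearMap.sub_apply]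
      rw [RelRB.rep_br_apply K (𝒜 := 𝒜) x y v,
        RelRB.rep_br_apply K (𝒜 := ℰ) (sA x) (sA y) (sV v)]
      simp only [map_sub]
      abel
    · -- (L5)
      intro x y m
      apply E.iM_inj
      simp only [map_sub, map_add, hρM, hω, E.i_rep, LinearMap.sub_apply]
      rw [RelRB.rep_br_apply K (𝒜 := ℰ) (sA x) (sA y) (E.iM m)]
      abel
    · -- (L6)
      intro x v a
      apply E.iM_inj
      simp only [map_sub, map_add, map_neg, hρM, hμ, hϖ, hρB, E.i_rep,
        LinearMap.sub_apply]
      rw [RelRB.rep_br_apply K (𝒜 := ℰ) (sA x) (E.iB a) (sV v)]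
      abel
    · -- (L7)
      intro x a m
      apply E.iM_inj
      simp only [map_sub, hρM, E.i_rep, hρB]
      rw [RelRB.rep_br_apply K (𝒜 := ℰ) (sA x) (E.iB a) (E.iM m)]
    · -- (L8)
      intro v m
      apply E.iB_inj
      simp only [map_add, map_sub, map_neg, hρB, hχ, hμ, hρM, E.iB_br, E.iB_T,
        E.i_rep, LinearMap.sub_apply]
      rw [ℰ.rb (sV v) (E.iM m)]
      simp only [map_sub]
      abel
    · -- (L9)
      intro v₁ v₂
      apply E.iB_inj
      simp only [map_add, map_sub, map_neg, hρB, hχ, hω, hϖ, hμ, E.iB_br, E.iB_T,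
        LinearMap.sub_apply, LinearMap.neg_apply]
      rw [𝒜.rb v₁ v₂, ℰ.rb (sV v₁) (sV v₂)]
      simp only [map_sub]
      rw [RelRB.br_swap K (𝒜 := ℰ) (sA (𝒜.T v₂)) (ℰ.T (sV v₁)),
        RelRB.br_swap K (𝒜 := ℰ) (sA (𝒜.T v₂)) (sA (𝒜.T v₁))]
      abel

end
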